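/- Define X₁(a,b,c) = -a·(conj(b)·c) + ⟨a,b⟩c + ⟨b,c⟩a - ⟨c,a⟩b on the octonions O. Then X₁ is totally skew-symmetric in its three arguments. -/

import Mathlib

open Quaternion

noncomputable section

/-- Cayley–Dickson double of the quaternions: pairs `a + b·l`. -/
abbrev CD : Type := ℍ[ℝ] × ℍ[ℝ]

/-- Cayley–Dickson multiplication with `l² = s`:
`(a+bl)(c+dl) = (ac + s·conj(d)·b) + (da + b·conj(c))l`. -/
def cdMul (s : ℝ) (x y : CD) : CD :=
  (x.1 * y.1 + s • (star y.2 * x.2), y.2 * x.1 + x.2 * star y.1)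

/-- Conjugation: `conj(a+bl) = conj(a) - bl`. -/
def cdConj (x : CD) : CD := (star x.1, -x.2)

/-- The unit `1 = e₀`. -/
def cdOne : CD := (1, 0)

/-- The norm `N(x)`, i.e. the real number with `x·conj(x) = N(x)·1`. -/
def Nr (s : ℝ) (x : CD) : ℝ := ((cdMul s x (cdConj x)).1).re

/-- The inner product obtained by polarizing the norm:
`⟨x,y⟩ = (1/2)(N(x+y) - N(x) - N(y))`. -/
def ip (s : ℝ) (x y : CD) : ℝ := (Nr s (x + y) - Nr s x - Nr s y) / 2

/-- Zvengrowski's 3-fold cross product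
`X₁(a,b,c) = -a(conj(b)c) + ⟨a,b⟩c + ⟨b,c⟩a - ⟨c,a⟩b` on the octonions. -/
def X1 (a b c : CD) : CD :=
  -(cdMul (-1) a (cdMul (-1) (cdConj b) c))
    + (ip (-1) a b) • c + (ip (-1) b c) • a - (ip (-1) c a) • b

/-! Both transpositions reduce to the linearised composition identities
`conj(y)z + conj(z)y = 2⟨y,z⟩` and `x(conj(y)z) + y(conj(x)z) = 2⟨x,y⟩z`, valid in every
Cayley–Dickson double of the quaternions: with them, `X₁(a,b,c) + X₁(b,a,c)` and
`X₁(a,b,c) + X₁(a,c,b)` cancel term by term. The third transposition is a composite of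
these two. -/

open scoped RealInnerProductSpace

section CayleyDickson

variable (s : ℝ)

lemma Nr_eq_normSq_sub (x : CD) : Nr s x = normSq x.1 - s * normSq x.2 := by
  simp only [Nr, cdMul, cdConj, star_neg, neg_mul, re_add, re_neg, re_smul, self_mul_star,
    star_mul_self, re_coe, smul_eq_mul]
  ring

lemma ip_eq_inner (x y : CD) : ip s x y = ⟪x.1, y.1⟫ - s * ⟪x.2, y.2⟫ := by
  simp only [ip, Nr_eq_normSq_sub, Prod.fst_add, Prod.snd_add, normSq_add, inner_def]
  ring

lemma ip_comm (x y : CD) : ip s x y = ip s y x := by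
  simp only [ip, add_comm x y]
  ring

lemma cdMul_add_right (x y z : CD) : cdMul s x (y + z) = cdMul s x y + cdMul s x z := by
  ext1 <;>
    simp only [cdMul, Prod.fst_add, Prod.snd_add, star_add, mul_add, add_mul, smul_add] <;>
    abel

lemma cdMul_smul_right (x y : CD) (r : ℝ) : cdMul s x (r • y) = r • cdMul s x y := by
  ext1 <;> simp [cdMul, smul_add, smul_comm r s]

lemma cdMul_cdOne (x : CD) : cdMul s x cdOne = x := by
  ext1 <;> simp [cdMul, cdOne]

lemma cdConj_mul_add_cdConj_mul (y z : CD) :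
    cdMul s (cdConj y) z + cdMul s (cdConj z) y = (2 * ip s y z) • cdOne := by
  rw [ip_eq_inner]
  ext : 1 <;> ext <;>
    simp only [cdMul, cdConj, cdOne, inner_def, Prod.fst_add, Prod.snd_add, Prod.smul_fst,
      Prod.smul_snd, re_mul, imI_mul, imJ_mul, imK_mul, re_add, imI_add, imJ_add, imK_add, re_neg,
      imI_neg, imJ_neg, imK_neg, re_smul, imI_smul, imJ_smul, imK_smul, re_star, imI_star,
      imJ_star, imK_star, re_one, imI_one, imJ_one, imK_one, re_zero, imI_zero, imJ_zero, imK_zero,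
      smul_eq_mul] <;>
    ring

lemma cdMul_cdConj_mul_add (x y z : CD) :
    cdMul s x (cdMul s (cdConj y) z) + cdMul s y (cdMul s (cdConj x) z) = (2 * ip s x y) • z := by
  rw [ip_eq_inner]
  ext : 1 <;> ext <;>
    simp only [cdMul, cdConj, inner_def, Prod.fst_add, Prod.snd_add, Prod.smul_fst,
      Prod.smul_snd, re_mul, imI_mul, imJ_mul, imK_mul, re_add, imI_add, imJ_add, imK_add, re_neg,
      imI_neg, imJ_neg, imK_neg, re_smul, imI_smul, imJ_smul, imK_smul, re_star, imI_star,
      imJ_star, imK_star, smul_eq_mul] <;>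
    ring

end CayleyDickson

lemma X1_swap_left (a b c : CD) : X1 a b c = -X1 b a c := by
  rw [eq_neg_iff_add_eq_zero]
  have h := cdMul_cdConj_mul_add (-1) a b c
  rw [X1, X1, ip_comm (-1) b a, ip_comm (-1) c b, ip_comm (-1) a c]
  linear_combination (norm := module) -h

lemma X1_swap_right (a b c : CD) : X1 a b c = -X1 a c b := by
  rw [eq_neg_iff_add_eq_zero]
  have h := congrArg (cdMul (-1) a) (cdConj_mul_add_cdConj_mul (-1) b c)
  rw [cdMul_add_right, cdMul_smul_right, cdMul_cdOne] at h
  rw [X1, X1, ip_comm (-1) c b, ip_comm (-1) b a, ip_comm (-1) a c]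
  linear_combination (norm := module) -h

/-- `X₁` is totally skew-symmetric in its three arguments. -/
theorem X1_totally_skew (a b c : CD) :
    X1 a b c = - X1 b a c ∧ X1 a b c = - X1 a c b ∧ X1 a b c = - X1 c b a := by
  refine ⟨X1_swap_left a b c, X1_swap_right a b c, ?_⟩
  rw [X1_swap_left, X1_swap_right, X1_swap_left, neg_neg]
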